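/- Let γ < 0 be a real eigenvalue of A with unit eigenvector u, and V = I_d. For X := (u, -u, …, -u) ∈ (ℝ^d)^n and any R > 0, ‖D_{RX} f‖₂ ≥ √(n-1) / (1 + (n-1) e^{-2R²|γ|}). -/

import Mathlib

open Matrix

/-- Self-attention (with `V = I`) as a map between sequence spaces with the Frobenius norm. -/
noncomputable def attnF (n d : ℕ) (A : Matrix (Fin d) (Fin d) ℝ) :
    PiLp 2 (fun _ : Fin n => EuclideanSpace ℝ (Fin d)) →
      PiLp 2 (fun _ : Fin n => EuclideanSpace ℝ (Fin d)) :=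
  fun x => WithLp.toLp 2 fun i => ∑ j, (Real.exp ((x i) ⬝ᵥ (Aᵀ.mulVec (x j))) /
      ∑ l, Real.exp ((x i) ⬝ᵥ (Aᵀ.mulVec (x l)))) • x j

/-!
Perturb the first token of `R • X` along `u`. All tokens stay multiples of the eigenvector `u`,
so attention only mixes their coefficients: each of the other `n - 1` output tokens is
`φ (R + t) • u`, where `φ` is the softmax average of `R + t` (logit `R |γ| (R + t)`) and `-R`
(total weight `(n - 1) e^{-R² |γ|}`). As `γ < 0`, `φ' R ≥ 1 / (1 + (n - 1) e^{-2 R² |γ|})`, so the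
Jacobian maps this unit direction to a vector with `n - 1` components of at least that norm.
-/

open Real Finset

theorem HasFDerivAt.hasDerivAt_comp_line_apply {𝕜 E ι : Type*} [NontriviallyNormedField 𝕜]
    [NormedAddCommGroup E] [NormedSpace 𝕜 E] [Fintype ι] {β : ι → Type*}
    [∀ i, NormedAddCommGroup (β i)] [∀ i, NormedSpace 𝕜 (β i)] {F : E → PiLp 2 β}
    {L : E →L[𝕜] PiLp 2 β} {p : E} (hF : HasFDerivAt F L p) (h : E) (i : ι) :
    HasDerivAt (fun t : 𝕜 => F (p + t • h) i) (L h i) 0 := by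
  have hline : HasDerivAt (fun t : 𝕜 => p + t • h) h 0 := by
    simpa using ((hasDerivAt_id (0 : 𝕜)).smul_const h).const_add p
  have hF' : HasFDerivAt F L (p + (0 : 𝕜) • h) := by simpa using hF
  exact (PiLp.hasFDerivAt_apply 2 _ i).comp_hasDerivAt 0 (hF'.comp_hasDerivAt 0 hline)

theorem PiLp.sqrt_card_mul_le_norm {ι κ : Type*} [Fintype ι] [Fintype κ] {β : ι → Type*}
    [∀ i, SeminormedAddCommGroup (β i)] (y : PiLp 2 β) (e : κ ↪ ι) {r : ℝ} (hr : 0 ≤ r)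
    (h : ∀ k, r ≤ ‖y (e k)‖) : √(Fintype.card κ : ℝ) * r ≤ ‖y‖ := by
  rw [← sqrt_sq hr, ← sqrt_mul (Nat.cast_nonneg _), ← sqrt_sq (norm_nonneg y)]
  refine sqrt_le_sqrt ?_
  calc (Fintype.card κ : ℝ) * r ^ 2 = ∑ k, r ^ 2 := by rw [sum_const, nsmul_eq_mul, card_univ]
    _ ≤ ∑ k, ‖y (e k)‖ ^ 2 := sum_le_sum fun k _ => pow_le_pow_left₀ hr (h k) 2
    _ = ∑ i ∈ univ.map e, ‖y i‖ ^ 2 := (sum_map univ e fun i => ‖y i‖ ^ 2).symm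
    _ ≤ ∑ i, ‖y i‖ ^ 2 := sum_le_univ_sum_of_nonneg fun i => sq_nonneg _
    _ = ‖y‖ ^ 2 := (PiLp.norm_sq_eq_of_L2 β y).symm

/-- Softmax average of the value `s`, with logit `a * s`, and the value `b`, with total weight
`K`. -/
noncomputable def softmaxMean (a b K s : ℝ) : ℝ :=
  (s * exp (a * s) + b * K) / (exp (a * s) + K)

theorem hasDerivAt_softmaxMean {K : ℝ} (hK : 0 ≤ K) (a b s : ℝ) :
    HasDerivAt (softmaxMean a b K)
      (exp (a * s) / (exp (a * s) + K) + a * (s - b) * K * exp (a * s) / (exp (a * s) + K) ^ 2)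
      s := by
  have hE : HasDerivAt (fun s => exp (a * s)) (exp (a * s) * a) s := by
    simpa using ((hasDerivAt_id s).const_mul a).exp
  have hnum : HasDerivAt (fun s => s * exp (a * s) + b * K)
      (1 * exp (a * s) + s * (exp (a * s) * a)) s :=
    ((hasDerivAt_id' s).mul hE).add_const _
  have hden : exp (a * s) + K ≠ 0 := by positivity
  refine (hnum.fun_div (hE.add_const K) hden).congr_deriv ?_
  field_simp
  ring

theorem exp_div_exp_add_mul_exp_neg (x m : ℝ) :
    exp x / (exp x + m * exp (-x)) = 1 / (1 + m * exp (-2 * x)) := by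
  have h : exp (-2 * x) * exp x = exp (-x) := by rw [← exp_add]; ring_nf
  rw [← h]
  field_simp

theorem exists_hasDerivAt_softmaxMean_ge {m : ℝ} (hm : 0 ≤ m) {γ : ℝ} (hγ : γ ≤ 0) (R : ℝ) :
    ∃ c, HasDerivAt (softmaxMean (-(γ * R)) (-R) (m * exp (γ * R ^ 2))) c R ∧
      1 / (1 + m * exp (-2 * R ^ 2 * |γ|)) ≤ c := by
  refine ⟨_, hasDerivAt_softmaxMean (by positivity) _ _ R, ?_⟩
  have hlogit : 0 ≤ -(γ * R) * (R - -R) := by nlinarith [sq_nonneg R]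
  have hmean : exp (-(γ * R) * R) / (exp (-(γ * R) * R) + m * exp (γ * R ^ 2)) =
      1 / (1 + m * exp (-2 * R ^ 2 * |γ|)) := by
    have hK : γ * R ^ 2 = -(-(γ * R) * R) := by ring
    have hexp : -2 * R ^ 2 * -γ = -2 * (-(γ * R) * R) := by ring
    rw [abs_of_nonpos hγ, hK, hexp, exp_div_exp_add_mul_exp_neg]
  rw [← hmean]
  exact le_add_of_nonneg_right (by positivity)

section SelfAttention

variable {n d : ℕ}

theorem differentiable_attnF (A : Matrix (Fin d) (Fin d) ℝ) :
    Differentiable ℝ (attnF n d A) := by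
  rw [differentiable_piLp]
  intro i
  have hZ (x : PiLp 2 (fun _ : Fin n => EuclideanSpace ℝ (Fin d))) :
      ∑ l, exp ((x i) ⬝ᵥ (Aᵀ *ᵥ (x l))) ≠ 0 :=
    (sum_pos (fun l _ => exp_pos _) ⟨i, mem_univ i⟩).ne'
  simp only [attnF, PiLp.toLp_apply]
  simp only [dotProduct, mulVec] at hZ ⊢
  fun_prop (disch := exact hZ _)

variable {A : Matrix (Fin d) (Fin d) ℝ} {γ : ℝ} {u : EuclideanSpace ℝ (Fin d)}

theorem dotProduct_transpose_mulVec_eigenvector (hu : ‖u‖ = 1) (hAu : A *ᵥ u = γ • u) :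
    u ⬝ᵥ Aᵀ *ᵥ u = γ := by
  have huu : u ⬝ᵥ u = 1 := by
    have h := real_inner_self_eq_norm_sq u
    rw [EuclideanSpace.inner_eq_star_dotProduct, hu] at h
    simpa using h
  rw [dotProduct_transpose_mulVec, hAu, dotProduct_smul, huu, smul_eq_mul, mul_one]

theorem attnF_toLp_smul_eigenvector (hu : ‖u‖ = 1) (hAu : A *ᵥ u = γ • u)
    (s : Fin n → ℝ) (i : Fin n) :
    attnF n d A (WithLp.toLp 2 fun j => s j • u) i =
      ((∑ j, exp (γ * s i * s j) * s j) / ∑ j, exp (γ * s i * s j)) • u := by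
  simp only [attnF, PiLp.toLp_apply, WithLp.ofLp_smul, smul_dotProduct, mulVec_smul,
    dotProduct_smul, dotProduct_transpose_mulVec_eigenvector hu hAu, smul_eq_mul]
  rw [sum_div, sum_smul]
  refine sum_congr rfl fun j _ => ?_
  rw [smul_smul]
  ring_nf

theorem attnF_smul_add_smul_single_apply_succ {m : ℕ} (hu : ‖u‖ = 1) (hAu : A *ᵥ u = γ • u)
    {X : PiLp 2 (fun _ : Fin (m + 1) => EuclideanSpace ℝ (Fin d))}
    (hX : X = fun i : Fin (m + 1) => if i.val = 0 then u else -u) (R t : ℝ) (j : Fin m) :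
    attnF (m + 1) d A (R • X + t • PiLp.single 2 0 u) j.succ =
      softmaxMean (-(γ * R)) (-R) (m * exp (γ * R ^ 2)) (R + t) • u := by
  have hpoint : R • X + t • PiLp.single 2 0 u =
      WithLp.toLp 2 fun k => (Fin.cons (R + t) (fun _ => -R) : Fin (m + 1) → ℝ) k • u := by
    ext k : 1
    cases k using Fin.cases <;> simp [hX, add_smul]
  rw [hpoint, attnF_toLp_smul_eigenvector hu hAu, Fin.sum_univ_succ, Fin.sum_univ_succ]
  simp only [Fin.cons_zero, Fin.cons_succ, sum_const, card_univ, Fintype.card_fin, nsmul_eq_mul,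
    softmaxMean]
  ring_nf

end SelfAttention

theorem attn_jacobian_lower_bound_neg_eigenvalue_general {n d : ℕ}
    (A : Matrix (Fin d) (Fin d) ℝ) (γ : ℝ) (hγ : γ < 0)
    (u : EuclideanSpace ℝ (Fin d)) (hu : ‖u‖ = 1) (hAu : A.mulVec u = γ • u)
    (R : ℝ)
    (X : PiLp 2 (fun _ : Fin n => EuclideanSpace ℝ (Fin d)))
    (hX : X = fun i : Fin n => if i.val = 0 then u else -u) :
    Real.sqrt ((n : ℝ) - 1) / (1 + ((n : ℝ) - 1) * Real.exp (-2 * R ^ 2 * |γ|)) ≤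
      ‖fderiv ℝ (attnF n d A) (R • X)‖ := by
  rcases n with _ | m
  · -- the left side is `√(-1) / _ = 0`
    simp [sqrt_eq_zero_of_nonpos]
  set H : PiLp 2 (fun _ : Fin (m + 1) => EuclideanSpace ℝ (Fin d)) := PiLp.single 2 0 u
  set D := fderiv ℝ (attnF (m + 1) d A) (R • X)
  have hD : HasFDerivAt (attnF (m + 1) d A) D (R • X) :=
    (differentiable_attnF A).differentiableAt.hasFDerivAt
  obtain ⟨c, hc, hc_ge⟩ := exists_hasDerivAt_softmaxMean_ge (Nat.cast_nonneg m) hγ.le R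
  have hDH (j : Fin m) : D H j.succ = c • u := by
    refine (hD.hasDerivAt_comp_line_apply H j.succ).unique ?_
    simp only [H, attnF_smul_add_smul_single_apply_succ hu hAu hX]
    exact (HasDerivAt.comp_const_add R 0 (by rwa [add_zero])).smul_const u
  have hDH_norm (j : Fin m) : c ≤ ‖D H (Fin.succEmb m j)‖ := by
    rw [Fin.coe_succEmb, hDH, norm_smul, hu, mul_one, Real.norm_eq_abs]
    exact le_abs_self c
  calc _ = √(m : ℝ) * (1 / (1 + m * exp (-2 * R ^ 2 * |γ|))) := by
        push_cast
        rw [add_sub_cancel_right, mul_one_div]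
    _ ≤ √(m : ℝ) * c := by gcongr
    _ ≤ ‖D H‖ := by
      simpa using PiLp.sqrt_card_mul_le_norm (D H) _ (hc_ge.trans' (by positivity)) hDH_norm
    _ ≤ ‖D‖ := by simpa [H, hu] using D.le_opNorm H

/-- lower bound on the Jacobian norm of self-attention at
`R·(u, -u, …, -u)` for a negative eigenvalue `γ` of `A` with unit eigenvector `u`. -/
theorem attn_jacobian_lower_bound_neg_eigenvalue {n d : ℕ} (hn : 0 < n)
    (A : Matrix (Fin d) (Fin d) ℝ) (γ : ℝ) (hγ : γ < 0)
    (u : EuclideanSpace ℝ (Fin d)) (hu : ‖u‖ = 1) (hAu : A.mulVec u = γ • u)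
    (R : ℝ) (hR : 0 < R)
    (X : PiLp 2 (fun _ : Fin n => EuclideanSpace ℝ (Fin d)))
    (hX : X = fun i : Fin n => if i.val = 0 then u else -u) :
    Real.sqrt ((n : ℝ) - 1) / (1 + ((n : ℝ) - 1) * Real.exp (-2 * R ^ 2 * |γ|)) ≤
      ‖fderiv ℝ (attnF n d A) (R • X)‖ :=
  attn_jacobian_lower_bound_neg_eigenvalue_general A γ hγ u hu hAu R X hX
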